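/- arXiv:2004.01955 — 3 statements merged into one kernel-verified Lean document; each statement's English description precedes it below -/
import Mathlib

section
/- A connected 2-edge-coloured graph G is eulerian (has a closed alternating trail using every edge) if and only if every vertex v has equal numbers of incident edges of colour 1 and of colour 2. -/
/-!
Along an alternating walk every passage through a vertex `x` enters and leaves `x` by edges of
different colours, so a closed alternating trail uses equally many edges of each colour at `x`;
if it uses every edge, `G` is balanced.

Conversely, let `G` be balanced and take a longest alternating trail. If it could not be closed
up, then at its last vertex it would have used more edges of its last colour than of the other,
and balance would supply an unused edge of the other colour to extend it. So it is closed, and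
therefore leaves equally many unused edges of both colours at every vertex. If some edge were
unused, connectivity would put an unused edge at a vertex of the trail; rotating the trail to
start there, an unused edge of its first colour would again extend it.
-/

/-- A 2-edge-coloured (multi)graph: for each colour (`false` = colour 1 / red,
`true` = colour 2 / blue) a symmetric loopless adjacency relation. -/
structure TwoEC (V : Type) where
  adj : Bool → V → V → Prop
  symm : ∀ c u v, adj c u v → adj c v u
  loopless : ∀ c v, ¬ adj c v v

namespace TwoEC

variable {V : Type}

/-- A step of a walk: (source, colour, target). -/
abbrev Step (V : Type) := V × Bool × V

def stepSrc (s : Step V) : V := s.1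
def stepCol (s : Step V) : Bool := s.2.1
def stepTgt (s : Step V) : V := s.2.2
/-- The (coloured, undirected) edge used by a step. -/
def stepEdge (s : Step V) : Bool × Sym2 V := (s.2.1, Sym2.mk s.1 s.2.2)

/-- `L` is an alternating walk from `u` to `v` (nonempty list of steps,
consecutive steps share a vertex and differ in colour). -/
def IsAltWalk (G : TwoEC V) (u v : V) (L : List (Step V)) : Prop :=
  L ≠ [] ∧ L.head?.map stepSrc = some u ∧ L.getLast?.map stepTgt = some v ∧
  (∀ s ∈ L, G.adj (stepCol s) (stepSrc s) (stepTgt s)) ∧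
  L.Chain' (fun s t => stepTgt s = stepSrc t ∧ stepCol s ≠ stepCol t)

def firstColour (L : List (Step V)) : Option Bool := L.head?.map stepCol
def lastColour (L : List (Step V)) : Option Bool := L.getLast?.map stepCol

/-- An alternating trail: an alternating walk using no (coloured) edge twice. -/
def IsAltTrail (G : TwoEC V) (u v : V) (L : List (Step V)) : Prop :=
  G.IsAltWalk u v L ∧ (L.map stepEdge).Nodup

/-- An alternating path: an alternating walk with no repeated vertex. -/
def IsAltPath (G : TwoEC V) (u v : V) (L : List (Step V)) : Prop :=
  G.IsAltWalk u v L ∧ (L.map stepSrc ++ [v]).Nodup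

/-- A (nonempty) closed alternating trail: also the last and first colours differ. -/
def IsClosedAltTrail (G : TwoEC V) (L : List (Step V)) : Prop :=
  ∃ u, G.IsAltTrail u u L ∧ lastColour L ≠ firstColour L

/-- An alternating cycle: a closed alternating walk with pairwise distinct vertices. -/
def IsAltCycle (G : TwoEC V) (L : List (Step V)) : Prop :=
  (∃ u, G.IsAltWalk u u L) ∧ (L.map stepSrc).Nodup ∧ lastColour L ≠ firstColour L

/-- The walk `L` visits the vertex `v`. -/
def visits (L : List (Step V)) (v : V) : Prop := v ∈ L.map stepSrc ∨ v ∈ L.map stepTgt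

/-- A spanning closed alternating trail exists. -/
def Supereulerian (G : TwoEC V) : Prop :=
  ∃ L, G.IsClosedAltTrail L ∧ ∀ v : V, visits L v

/-- Colour-connectivity: between any two distinct vertices there are two alternating
paths whose union is an alternating closed walk (equivalently, they start with
different colours and end with different colours). -/
def ColourConnected (G : TwoEC V) : Prop :=
  ∀ u v : V, u ≠ v → ∃ P₁ P₂, G.IsAltPath u v P₁ ∧ G.IsAltPath u v P₂ ∧
    firstColour P₁ ≠ firstColour P₂ ∧ lastColour P₁ ≠ lastColour P₂

/-- Trail-colour-connectivity: same as colour-connectivity but with trails. -/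
def TrailColourConnected (G : TwoEC V) : Prop :=
  ∀ u v : V, u ≠ v → ∃ T₁ T₂, G.IsAltTrail u v T₁ ∧ G.IsAltTrail u v T₂ ∧
    firstColour T₁ ≠ firstColour T₂ ∧ lastColour T₁ ≠ lastColour T₂

/-- The induced 2-edge-coloured subgraph on a set of vertices. -/
def induce (G : TwoEC V) (S : Set V) : TwoEC S where
  adj c u v := G.adj c u v
  symm := fun c u v h => G.symm c u v h
  loopless := fun c v => G.loopless c v

/-- An eulerian factor: a partition of the vertex set into classes each of which
induces a supereulerian subgraph. -/
def EulerianFactor (G : TwoEC V) : Prop :=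
  ∃ r : Setoid V, ∀ v : V, Supereulerian (G.induce {u | r.r u v})

/-- `H` is an extension of `G`: obtained by blowing up each vertex of `G` into a
nonempty independent set, preserving colours. -/
def IsExtension (G : TwoEC V) {W : Type} (H : TwoEC W) : Prop :=
  ∃ f : W → V, Function.Surjective f ∧ ∀ c x y, H.adj c x y ↔ G.adj c (f x) (f y)

/-- M-closed: endpoints of every monochromatic path of length two are adjacent. -/
def MClosed (G : TwoEC V) : Prop :=
  ∀ c x y z, G.adj c x y → G.adj c y z → x ≠ z → ∃ c', G.adj c' x z

/-- Complete multipartite 2-edge-coloured graph: two vertices are adjacent (in some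
colour) iff they lie in different parts. -/
def IsCompleteMultipartite (G : TwoEC V) : Prop :=
  ∃ p : V → V, ∀ u v, (∃ c, G.adj c u v) ↔ p u ≠ p v

/-- Complete bipartite 2-edge-coloured graph (with both parts nonempty). -/
def IsCompleteBipartite (G : TwoEC V) : Prop :=
  ∃ p : V → Bool, (∀ b, ∃ x, p x = b) ∧ ∀ u v, (∃ c, G.adj c u v) ↔ p u ≠ p v

/-- A 2-edge-coloured complete graph: each pair of distinct vertices is joined by
exactly one edge, which has exactly one colour. -/
def IsComplete (G : TwoEC V) : Prop :=
  ∀ u v : V, u ≠ v →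
    ((G.adj false u v ∨ G.adj true u v) ∧ ¬ (G.adj false u v ∧ G.adj true u v))

/-- An alternating cycle factor: vertex-disjoint alternating cycles covering `V`. -/
def AltCycleFactor (G : TwoEC V) : Prop :=
  ∃ Ls : Set (List (Step V)), (∀ L ∈ Ls, G.IsAltCycle L) ∧
    (∀ v : V, ∃ L ∈ Ls, visits L v) ∧
    (∀ L₁ ∈ Ls, ∀ L₂ ∈ Ls, L₁ ≠ L₂ → ∀ v : V, ¬ (visits L₁ v ∧ visits L₂ v))

/-- An alternating hamiltonian cycle. -/
def IsAltHamCycle (G : TwoEC V) (L : List (Step V)) : Prop :=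
  G.IsAltCycle L ∧ ∀ v : V, visits L v

/-- Connectivity of the underlying (uncoloured) graph. -/
def Connected (G : TwoEC V) : Prop :=
  ∀ u v : V, Relation.ReflTransGen (fun a b => ∃ c, G.adj c a b) u v

end TwoEC

open TwoEC in
/-- Eulerian: some closed alternating trail (possibly empty) uses every edge. -/
def TwoEC.Eulerian {V : Type} (G : TwoEC V) : Prop :=
  ∃ L : List (Step V), (L = [] ∨ G.IsClosedAltTrail L) ∧
    ∀ c (u v : V), G.adj c u v → ((u, c, v) ∈ L ∨ (v, c, u) ∈ L)


theorem Cycle.chain_coe_iff {α : Type*} {r : α → α → Prop} {L : List α} :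
    Cycle.Chain r (L : Cycle α) ↔
      L.IsChain r ∧ ∀ b ∈ L.getLast?, ∀ a ∈ L.head?, r b a := by
  cases L with
  | nil => simp
  | cons a l => exact (List.isChain_append (l₁ := a :: l) (l₂ := [a])).trans (by simp)

namespace TwoEC

variable {V : Type}

def AltNext (s t : Step V) : Prop := stepTgt s = stepSrc t ∧ stepCol s ≠ stepCol t

def nbrs (G : TwoEC V) (d : Bool) (x : V) : Set V := {u | G.adj d x u}

def usedNbrs (L : List (Step V)) (x : V) (d : Bool) : Set V := {u | (d, s(x, u)) ∈ L.map stepEdge}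

theorem mem_map_stepEdge {L : List (Step V)} {d : Bool} {x y : V} :
    (d, s(x, y)) ∈ L.map stepEdge ↔ (x, d, y) ∈ L ∨ (y, d, x) ∈ L := by
  simp only [List.mem_map, stepEdge, Prod.ext_iff, Sym2.eq_iff]
  constructor
  · rintro ⟨⟨p, c, q⟩, hs, rfl, ⟨rfl, rfl⟩ | ⟨rfl, rfl⟩⟩ <;> simp_all
  · rintro (h | h)
    · exact ⟨_, h, rfl, Or.inl ⟨rfl, rfl⟩⟩
    · exact ⟨_, h, rfl, Or.inr ⟨rfl, rfl⟩⟩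

section Counting

variable [DecidableEq V]

def inCount (L : List (Step V)) (x : V) (d : Bool) : ℕ :=
  L.countP fun s => stepTgt s = x ∧ stepCol s = d

def outCount (L : List (Step V)) (x : V) (d : Bool) : ℕ :=
  L.countP fun s => stepSrc s = x ∧ stepCol s = d

theorem encard_usedNbrs_singleton {a : Step V} (ha : stepSrc a ≠ stepTgt a) (x : V) (d : Bool) :
    (usedNbrs [a] x d).encard = inCount [a] x d + outCount [a] x d := by
  obtain ⟨p, c, q⟩ := a
  have hsplit : usedNbrs [(p, c, q)] x d =
      {u | q = x ∧ c = d ∧ p = u} ∪ {u | p = x ∧ c = d ∧ q = u} := by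
    ext u
    simp only [usedNbrs, List.map_cons, List.map_nil, List.mem_singleton, stepEdge,
      Prod.ext_iff, Sym2.eq_iff, Set.mem_ofPred_eq, Set.mem_union]
    grind
  have hdisj : Disjoint {u | q = x ∧ c = d ∧ p = u} {u | p = x ∧ c = d ∧ q = u} :=
    Set.disjoint_left.2 fun _ h h' => ha (h'.1.trans h.1.symm)
  rw [hsplit, Set.encard_union_eq hdisj]
  by_cases hc : c = d <;> by_cases hp : p = x <;> by_cases hq : q = x <;>
    simp [inCount, outCount, stepSrc, stepTgt, stepCol, hc, hp, hq]

theorem ncard_usedNbrs {L : List (Step V)} (hloop : ∀ s ∈ L, stepSrc s ≠ stepTgt s)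
    (hnodup : (L.map stepEdge).Nodup) (x : V) (d : Bool) :
    (usedNbrs L x d).ncard = inCount L x d + outCount L x d := by
  suffices (usedNbrs L x d).encard = inCount L x d + outCount L x d by
    rw [Set.ncard_def, this]; rfl
  induction L with
  | nil => simp [usedNbrs, inCount, outCount]
  | cons a t ih =>
    rw [List.map_cons, List.nodup_cons] at hnodup
    have hsplit : usedNbrs (a :: t) x d = usedNbrs [a] x d ∪ usedNbrs t x d := by
      ext u; simp [usedNbrs]
    have hdisj : Disjoint (usedNbrs [a] x d) (usedNbrs t x d) := by
      refine Set.disjoint_left.2 fun u ha ht => hnodup.1 ?_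
      simp only [usedNbrs, List.map_cons, List.map_nil, List.mem_singleton, Set.mem_ofPred_eq] at ha
      exact ha ▸ ht
    rw [hsplit, Set.encard_union_eq hdisj,
      encard_usedNbrs_singleton (hloop a List.mem_cons_self),
      ih (fun s hs => hloop s (List.mem_cons_of_mem a hs)) hnodup.2]
    simp only [inCount, outCount, List.countP_cons, List.countP_nil]
    push_cast
    ring

theorem inCount_append (L L' : List (Step V)) (x : V) (d : Bool) :
    inCount (L ++ L') x d = inCount L x d + inCount L' x d := List.countP_append ..

theorem outCount_append (L L' : List (Step V)) (x : V) (d : Bool) :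
    outCount (L ++ L') x d = outCount L x d + outCount L' x d := List.countP_append ..

/-- Each arrival at `x` in colour `d`, except a final one, is followed by a departure in `!d`. -/
theorem inCount_add_outCount_head {a : Step V} {l : List (Step V)}
    (h : (a :: l).IsChain AltNext) (x : V) (d : Bool) :
    inCount (a :: l) x d + outCount [a] x (!d) =
      outCount (a :: l) x (!d) + inCount [(a :: l).getLast (List.cons_ne_nil a l)] x d := by
  induction l generalizing a with
  | nil => simp only [List.getLast_singleton]; ring
  | cons b l ih =>
    obtain ⟨⟨htgt, hcol⟩, hchain⟩ := List.isChain_cons_cons.1 h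
    have hlink : inCount [a] x d = outCount [b] x (!d) := by
      have : stepCol b = !stepCol a := by revert hcol; cases stepCol a <;> cases stepCol b <;> simp
      simp [inCount, outCount, htgt, this]
    have := ih hchain
    rw [List.getLast_cons (List.cons_ne_nil b l), ← List.singleton_append, inCount_append,
      outCount_append]
    omega

theorem inCount_eq_outCount_of_cycleChain {L : List (Step V)}
    (h : Cycle.Chain AltNext (L : Cycle (Step V))) (x : V) (d : Bool) :
    inCount L x d = outCount L x (!d) := by
  cases L with
  | nil => rfl
  | cons a l =>
    have := inCount_add_outCount_head (l := l ++ [a]) h x d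
    rw [List.getLast_cons (by simp), List.getLast_append_singleton, ← List.cons_append,
      inCount_append, outCount_append] at this
    omega

end Counting

structure IsTrail (G : TwoEC V) (L : List (Step V)) : Prop where
  adj : ∀ s ∈ L, G.adj (stepCol s) (stepSrc s) (stepTgt s)
  isChain : L.IsChain AltNext
  nodup : (L.map stepEdge).Nodup

structure IsClosedTrail (G : TwoEC V) (L : List (Step V)) : Prop extends G.IsTrail L where
  closes : ∀ b ∈ L.getLast?, ∀ a ∈ L.head?, AltNext b a

variable {G : TwoEC V} {L : List (Step V)}

namespace IsTrail

theorem src_ne_tgt (h : G.IsTrail L) : ∀ s ∈ L, stepSrc s ≠ stepTgt s :=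
  fun s hs hst => G.loopless _ _ (hst ▸ h.adj s hs)

theorem usedNbrs_subset (h : G.IsTrail L) (x : V) (d : Bool) : usedNbrs L x d ⊆ G.nbrs d x := by
  intro u hu
  rcases mem_map_stepEdge.1 hu with hs | hs
  · exact h.adj _ hs
  · exact G.symm _ _ _ (h.adj _ hs)

theorem append_singleton (h : G.IsTrail L) {s : Step V}
    (hadj : G.adj (stepCol s) (stepSrc s) (stepTgt s)) (hlink : ∀ b ∈ L.getLast?, AltNext b s)
    (hnew : stepEdge s ∉ L.map stepEdge) : G.IsTrail (L ++ [s]) where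
  adj t ht := by
    rcases List.mem_append.1 ht with ht | ht
    · exact h.adj t ht
    · exact (List.mem_singleton.1 ht) ▸ hadj
  isChain := h.isChain.append (List.isChain_singleton s) (by simpa using hlink)
  nodup := by
    rw [List.map_append, List.nodup_append]
    refine ⟨h.nodup, List.nodup_singleton _, fun e he e' he' hee => hnew ?_⟩
    rwa [← List.mem_singleton.1 he', ← hee]

variable [DecidableEq V]

theorem ncard_usedNbrs (h : G.IsTrail L) (x : V) (d : Bool) :
    (usedNbrs L x d).ncard = inCount L x d + outCount L x d :=
  TwoEC.ncard_usedNbrs h.src_ne_tgt h.nodup x d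

theorem ncard_usedNbrs_lt {a b : Step V} {l : List (Step V)} (h : G.IsTrail (a :: l))
    (hb : (a :: l).getLast (List.cons_ne_nil a l) = b) (hopen : ¬ AltNext b a) :
    (usedNbrs (a :: l) (stepTgt b) (!stepCol b)).ncard <
      (usedNbrs (a :: l) (stepTgt b) (stepCol b)).ncard := by
  have hc := inCount_add_outCount_head h.isChain (stepTgt b) (stepCol b)
  have hnc := inCount_add_outCount_head h.isChain (stepTgt b) (!stepCol b)
  have hstart : outCount [a] (stepTgt b) (!stepCol b) = 0 := by
    have : ¬ (stepSrc a = stepTgt b ∧ stepCol a = !stepCol b) := by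
      rintro ⟨hsrc, hcol⟩
      exact hopen ⟨hsrc.symm, by simp [hcol]⟩
    simp [outCount, this]
  have hend : inCount [b] (stepTgt b) (stepCol b) = 1 := by simp [inCount]
  have hend' : inCount [b] (stepTgt b) (!stepCol b) = 0 := by simp [inCount]
  rw [hb] at hc hnc
  rw [Bool.not_not] at hnc
  rw [h.ncard_usedNbrs, h.ncard_usedNbrs]
  omega

end IsTrail

namespace IsClosedTrail

theorem nil (G : TwoEC V) : G.IsClosedTrail [] :=
  ⟨⟨by simp, List.isChain_nil, List.nodup_nil⟩, by simp⟩

theorem cycleChain (h : G.IsClosedTrail L) : Cycle.Chain AltNext (L : Cycle (Step V)) :=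
  Cycle.chain_coe_iff.2 ⟨h.isChain, h.closes⟩

theorem append_comm {P Q : List (Step V)} (h : G.IsClosedTrail (P ++ Q)) :
    G.IsClosedTrail (Q ++ P) := by
  have hchain : Cycle.Chain AltNext ((Q ++ P : List (Step V)) : Cycle (Step V)) :=
    Cycle.coe_eq_coe.2 List.isRotated_append ▸ h.cycleChain
  obtain ⟨hch, hcl⟩ := Cycle.chain_coe_iff.1 hchain
  refine ⟨⟨fun s hs => h.adj s ?_, hch, ?_⟩, hcl⟩
  · exact List.mem_append.2 (List.mem_append.1 hs).symm
  · simpa only [List.map_append] using List.nodup_append_comm.1 (by simpa using h.nodup)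

theorem mem_map_src (h : G.IsClosedTrail L) {d : Bool} {x y : V}
    (he : (d, s(x, y)) ∈ L.map stepEdge) : x ∈ L.map stepSrc := by
  classical
  rcases mem_map_stepEdge.1 he with hs | hs
  · exact List.mem_map_of_mem hs
  · have hin : 0 < inCount L x d := List.countP_pos_iff.2 ⟨_, hs, by simp [stepTgt, stepCol]⟩
    rw [inCount_eq_outCount_of_cycleChain h.cycleChain] at hin
    obtain ⟨s, hs, hsx⟩ := List.countP_pos_iff.1 hin
    exact List.mem_map.2 ⟨s, hs, (of_decide_eq_true hsx).1⟩

theorem ncard_usedNbrs_not [DecidableEq V] (h : G.IsClosedTrail L) (x : V) (d : Bool) :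
    (usedNbrs L x (!d)).ncard = (usedNbrs L x d).ncard := by
  rw [h.ncard_usedNbrs, h.ncard_usedNbrs, inCount_eq_outCount_of_cycleChain h.cycleChain x d,
    inCount_eq_outCount_of_cycleChain h.cycleChain x (!d), Bool.not_not, add_comm]

end IsClosedTrail

theorem isClosedTrail_iff : G.IsClosedTrail L ↔ L = [] ∨ G.IsClosedAltTrail L := by
  rcases L with _ | ⟨a, l⟩
  · simpa using IsClosedTrail.nil G
  have hlast := List.getLast?_eq_some_getLast (List.cons_ne_nil a l)
  simp only [false_or, IsClosedAltTrail, IsAltTrail, IsAltWalk, lastColour,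
    firstColour, hlast, List.head?_cons, Option.map_some, Option.some.injEq, ne_eq,
    List.cons_ne_nil, not_false_eq_true, true_and]
  constructor
  · rintro ⟨⟨hadj, hchain, hnodup⟩, hcl⟩
    obtain ⟨htgt, hcol⟩ := hcl _ hlast a rfl
    exact ⟨stepSrc a, ⟨⟨rfl, htgt, hadj, hchain⟩, hnodup⟩, hcol⟩
  · rintro ⟨u, ⟨⟨hu, hv, hadj, hchain⟩, hnodup⟩, hcol⟩
    refine ⟨⟨hadj, hchain, hnodup⟩, ?_⟩
    simp only [hlast, Option.mem_def, Option.some.injEq, List.head?_cons]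
    rintro b rfl c rfl
    exact ⟨hv.trans hu.symm, hcol⟩

def IsBalanced (G : TwoEC V) : Prop :=
  ∀ v, Nat.card {u // G.adj false v u} = Nat.card {u // G.adj true v u}

theorem isBalanced_iff : G.IsBalanced ↔ ∀ d x, (G.nbrs (!d) x).ncard = (G.nbrs d x).ncard := by
  refine ⟨fun h d x => ?_, fun h x => h true x⟩
  cases d
  exacts [(h x).symm, h x]

theorem eulerian_iff :
    G.Eulerian ↔ ∃ L, G.IsClosedTrail L ∧ ∀ d x, G.nbrs d x ⊆ usedNbrs L x d := by
  simp only [Eulerian, isClosedTrail_iff, Set.subset_def, nbrs, usedNbrs, Set.mem_ofPred_eq,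
    mem_map_stepEdge]

theorem IsClosedTrail.isBalanced (h : G.IsClosedTrail L)
    (hcover : ∀ d x, G.nbrs d x ⊆ usedNbrs L x d) : G.IsBalanced := by
  classical
  have hused : ∀ d x, usedNbrs L x d = G.nbrs d x := fun d x =>
    (h.usedNbrs_subset x d).antisymm (hcover d x)
  refine isBalanced_iff.2 fun d x => ?_
  rw [← hused, ← hused, h.ncard_usedNbrs_not]

theorem IsClosedTrail.exists_src_not_nbrs_subset_usedNbrs (hconn : G.Connected)
    (h : G.IsClosedTrail L) (hne : L ≠ []) {c : Bool} {u : V}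
    (hu : ¬ G.nbrs c u ⊆ usedNbrs L u c) :
    ∃ x ∈ L.map stepSrc, ∃ d, ¬ G.nbrs d x ⊆ usedNbrs L x d := by
  by_contra! hall
  have hfar : ∀ z, Relation.ReflTransGen (fun a b => ∃ c, G.adj c a b) u z →
      z ∉ L.map stepSrc := by
    intro z hz
    induction hz with
    | refl => exact fun hu' => hu (hall u hu' c)
    | @tail y z _ hstep ih =>
      obtain ⟨d, hyz⟩ := hstep
      intro hz
      have : (d, s(z, y)) ∈ L.map stepEdge := hall z hz d (G.symm _ _ _ hyz)
      exact ih (h.mem_map_src (Sym2.eq_swap ▸ this))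
  obtain ⟨a, ha⟩ := List.exists_mem_of_ne_nil L hne
  exact hfar _ (hconn u (stepSrc a)) (List.mem_map_of_mem ha)

def IsLongestTrail (G : TwoEC V) (L : List (Step V)) : Prop :=
  G.IsTrail L ∧ ∀ T, G.IsTrail T → T.length ≤ L.length

theorem IsLongestTrail.not_isTrail_append_singleton (h : G.IsLongestTrail L) (s : Step V) :
    ¬ G.IsTrail (L ++ [s]) :=
  fun hs => by simpa using h.2 _ hs

section Finite

variable [Finite V]

theorem IsTrail.length_le (h : G.IsTrail L) : L.length ≤ Nat.card (Bool × Sym2 V) := by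
  simpa using h.nodup.length_le_natCard

theorem exists_isLongestTrail (G : TwoEC V) : ∃ L, G.IsLongestTrail L :=
  Set.exists_max_image {T | G.IsTrail T} List.length
    ((List.finite_length_le _ _).subset fun _ hT => IsTrail.length_le hT)
    ⟨[], (IsClosedTrail.nil G).toIsTrail⟩

theorem IsClosedTrail.nbrs_sdiff_usedNbrs_nonempty (hbal : G.IsBalanced) (h : G.IsClosedTrail L)
    {x : V} {c : Bool} (hc : (G.nbrs c x \ usedNbrs L x c).Nonempty) (d : Bool) :
    (G.nbrs d x \ usedNbrs L x d).Nonempty := by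
  classical
  by_cases hdc : d = c
  · exact hdc ▸ hc
  rw [Bool.eq_not.2 hdc, ← Set.ncard_pos, Set.ncard_sdiff (h.usedNbrs_subset x _),
    h.ncard_usedNbrs_not, isBalanced_iff.1 hbal, ← Set.ncard_sdiff (h.usedNbrs_subset x _),
    Set.ncard_pos]
  exact hc

theorem IsLongestTrail.isClosedTrail (hbal : G.IsBalanced) (h : G.IsLongestTrail L) :
    G.IsClosedTrail L := by
  classical
  rcases L with _ | ⟨a, l⟩
  · exact IsClosedTrail.nil G
  set b := (a :: l).getLast (List.cons_ne_nil a l) with hb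
  have hlast : (a :: l).getLast? = some b := List.getLast?_eq_some_getLast _
  by_cases hclose : AltNext b a
  · exact ⟨h.1, by simpa [hlast] using hclose⟩
  have hlt := h.1.ncard_usedNbrs_lt hb.symm hclose
  have hle : (usedNbrs (a :: l) (stepTgt b) (stepCol b)).ncard ≤
      (G.nbrs (!stepCol b) (stepTgt b)).ncard := by
    rw [isBalanced_iff.1 hbal]
    exact Set.ncard_le_ncard (h.1.usedNbrs_subset _ _)
  obtain ⟨u, hu, hnew⟩ := Set.exists_mem_notMem_of_ncard_lt_ncard (hlt.trans_le hle)
  have hlink : ∀ b' ∈ (a :: l).getLast?, AltNext b' (stepTgt b, !stepCol b, u) := by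
    simp [hlast, AltNext, stepSrc, stepCol]
  exact absurd (h.1.append_singleton (s := (stepTgt b, !stepCol b, u)) hu hlink hnew)
    (h.not_isTrail_append_singleton _)

theorem IsLongestTrail.nbrs_subset_usedNbrs (hconn : G.Connected) (hbal : G.IsBalanced)
    (h : G.IsLongestTrail L) (d : Bool) (x : V) : G.nbrs d x ⊆ usedNbrs L x d := by
  by_contra hcov
  have hclosed := h.isClosedTrail hbal
  have hne : L ≠ [] := by
    rintro rfl
    obtain ⟨u, hu, -⟩ := Set.not_subset.1 hcov
    exact h.not_isTrail_append_singleton (x, d, u)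
      ⟨fun t ht => List.mem_singleton.1 ht ▸ hu, List.isChain_singleton _,
        List.nodup_singleton _⟩
  obtain ⟨y, hy, c, hunused⟩ := hclosed.exists_src_not_nbrs_subset_usedNbrs hconn hne hcov
  obtain ⟨s, hs, rfl⟩ := List.mem_map.1 hy
  obtain ⟨P, Q, rfl⟩ := List.append_of_mem hs
  -- rotate the trail so that it starts, and hence ends, at `stepSrc s`
  have hrot : G.IsClosedTrail (s :: Q ++ P) := hclosed.append_comm
  have hrot_longest : G.IsLongestTrail (s :: Q ++ P) :=
    ⟨hrot.toIsTrail, fun T hT => (h.2 T hT).trans (by simp; omega)⟩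
  have hperm := (List.perm_append_comm (l₁ := s :: Q) (l₂ := P)).map stepEdge
  obtain ⟨v, hv, hvnew⟩ :=
    hclosed.nbrs_sdiff_usedNbrs_nonempty hbal (Set.sdiff_nonempty.2 hunused) (stepCol s)
  have hlink : ∀ b ∈ (s :: Q ++ P).getLast?, AltNext b (stepSrc s, stepCol s, v) :=
    fun b hb => hrot.closes b hb s rfl
  exact hrot_longest.not_isTrail_append_singleton _
    (hrot.append_singleton (s := (stepSrc s, stepCol s, v)) hv hlink
      fun hv' => hvnew (hperm.mem_iff.1 hv'))

end Finite

end TwoEC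

open TwoEC in
theorem eulerian_iff_balanced {V : Type} [Fintype V] (G : TwoEC V)
    (hconn : G.Connected) :
    G.Eulerian ↔
      ∀ v : V, Nat.card {u : V // G.adj false v u} = Nat.card {u : V // G.adj true v u} := by
  change G.Eulerian ↔ G.IsBalanced
  rw [eulerian_iff]
  constructor
  · rintro ⟨L, hL, hcover⟩
    exact hL.isBalanced hcover
  · intro hbal
    obtain ⟨T, hT⟩ := exists_isLongestTrail G
    exact ⟨T, hT.isClosedTrail hbal, hT.nbrs_subset_usedNbrs hconn hbal⟩
end

section
/- Let C1 and C2 be vertex-disjoint alternating cycles in a 2-edge-coloured graph G. If there exist vertices x on C1 and y on C2 that are similar (i.e., x and y are adjacent to exactly the same vertices and with the same edge colours), then G contains an alternating cycle C with V(C) = V(C1) ∪ V(C2). -/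
open TwoEC in
/-- Two vertices are similar: non-adjacent, and joined to exactly the same
vertices with the same colours. -/
def TwoEC.Similar {V : Type} (G : TwoEC V) (x y : V) : Prop :=
  (∀ c, ¬ G.adj c x y) ∧ ∀ c (w : V), G.adj c x w ↔ G.adj c y w

/-!
Rotate `C₁` to start at `x` and `C₂` to start at `y`, reversing `C₂` if necessary, so that both
start with an edge of the same colour `c`; each then ends with an edge of the other colour.
Since `x` and `y` are similar, the first edges `x u` and `y w` can be exchanged for the edges
`y u` and `x w`, and `x w … y u … x` (the rest of `C₂`, then the rest of `C₁`) is an alternating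
cycle on `V(C₁) ∪ V(C₂)`.
-/

namespace List

variable {α : Type*} {R : α → α → Prop}

theorem IsChain.imp_ends {a a' b b' : α} {l : List α} (h : IsChain R (a :: (l ++ [b])))
    (ha : ∀ {z}, R a z → R a' z) (hb : ∀ {z}, R z b → R z b') :
    IsChain R (a' :: (l ++ [b'])) := by
  have h' := h.imp_head ha
  rw [← isChain_reverse] at h' ⊢
  simp only [← cons_append, reverse_append, reverse_singleton, singleton_append] at h' ⊢
  exact h'.imp_head hb

end List

namespace Cycle

variable {α : Type*} {R : α → α → Prop}

theorem chain_reverse {s : Cycle α} : Chain R s.reverse ↔ Chain (flip R) s :=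
  Quotient.inductionOn' s fun l => by
    rcases l with - | ⟨a, l⟩
    · rfl
    · have hrot : ((a :: l).reverse : Cycle α) = (a :: l.reverse : List α) := by
        rw [List.reverse_cons, coe_eq_coe]
        exact List.isRotated_append
      change Chain R ((a :: l).reverse : Cycle α) ↔ Chain (flip R) ((a :: l : List α) : Cycle α)
      rw [hrot, chain_coe_cons, chain_coe_cons, ← List.isChain_reverse]
      simp only [List.reverse_cons, List.reverse_append, List.reverse_reverse, List.cons_append,
        List.reverse_nil, List.nil_append]
      rfl

theorem chain_coe_cons_iff_getLast {a : α} {l : List α} :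
    Chain R (a :: l : List α) ↔ List.IsChain R (a :: l) ∧ R ((a :: l).getLast (by simp)) a := by
  rw [chain_coe_cons, ← List.cons_append, List.isChain_append]
  simp [List.getLast?_eq_some_getLast]

end Cycle

open scoped List

namespace TwoEC

variable {V : Type} {G : TwoEC V}

def Alternates (s t : Step V) : Prop := stepTgt s = stepSrc t ∧ stepCol s ≠ stepCol t

-- Seeing an alternating cycle as a `Cycle` makes invariance under rotation free.
theorem isAltCycle_iff {L : List (Step V)} :
    G.IsAltCycle L ↔ L ≠ [] ∧ (∀ s ∈ L, G.adj (stepCol s) (stepSrc s) (stepTgt s)) ∧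
      (L.map stepSrc).Nodup ∧ Cycle.Chain Alternates (L : Cycle (Step V)) := by
  rcases L with - | ⟨s, T⟩
  · simp [IsAltCycle, IsAltWalk]
  · rw [Cycle.chain_coe_cons_iff_getLast]
    simp only [IsAltCycle, IsAltWalk, lastColour, firstColour, List.head?_cons,
      List.getLast?_eq_some_getLast, Option.map_some, Option.some.injEq, ne_eq, reduceCtorEq,
      not_false_eq_true, true_and, exists_eq_left', Alternates]
    exact ⟨fun ⟨⟨hlast, hadj, hchain⟩, hnd, hcol⟩ => ⟨hadj, hnd, hchain, hlast, hcol⟩,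
      fun ⟨hadj, hnd, hchain, hlast, hcol⟩ => ⟨⟨hlast, hadj, hchain⟩, hnd, hcol⟩⟩

theorem IsAltCycle.map_stepTgt_perm {L : List (Step V)} (h : G.IsAltCycle L) :
    L.map stepTgt ~ L.map stepSrc := by
  obtain ⟨hne, -, -, hchain⟩ := isAltCycle_iff.1 h
  obtain ⟨s, T, rfl⟩ := List.exists_cons_of_ne_nil hne
  have hnext : (s :: T).map stepTgt = (T ++ [s]).map stepSrc := by
    rw [← List.forall₂_eq_eq_eq, List.forall₂_map_left_iff, List.forall₂_map_right_iff]
    exact (List.isChain_cons_append_singleton_iff_forall₂.1 hchain).imp fun _ _ h => h.1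
  rw [hnext]
  exact (List.perm_append_singleton _ _).map _

theorem IsAltCycle.visits_iff {L : List (Step V)} (h : G.IsAltCycle L) {v : V} :
    visits L v ↔ v ∈ L.map stepSrc := by
  rw [visits, h.map_stepTgt_perm.mem_iff, or_self]

theorem IsAltCycle.alternates_getLast {s : Step V} {T : List (Step V)}
    (h : G.IsAltCycle (s :: T)) : Alternates ((s :: T).getLast (List.cons_ne_nil s T)) s :=
  (Cycle.chain_coe_cons_iff_getLast.1 (isAltCycle_iff.1 h).2.2.2).2

theorem IsAltCycle.append_comm {A B : List (Step V)} (h : G.IsAltCycle (A ++ B)) :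
    G.IsAltCycle (B ++ A) := by
  obtain ⟨hne, hadj, hnd, hchain⟩ := isAltCycle_iff.1 h
  have hrot : ((B ++ A : List (Step V)) : Cycle (Step V)) = (A ++ B : List (Step V)) :=
    Cycle.coe_eq_coe.2 List.isRotated_append
  refine isAltCycle_iff.2 ⟨by simpa [and_comm] using hne, fun s hs => ?_, ?_, hrot ▸ hchain⟩
  · exact hadj s (List.perm_append_comm.mem_iff.1 hs)
  · exact (List.perm_append_comm.map _).nodup_iff.1 hnd

theorem IsAltCycle.exists_cons_of_mem {L : List (Step V)} (h : G.IsAltCycle L) {s : Step V}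
    (hs : s ∈ L) : ∃ T, G.IsAltCycle (s :: T) ∧ (s :: T).map stepSrc ~ L.map stepSrc := by
  obtain ⟨A, B, rfl⟩ := List.append_of_mem hs
  exact ⟨B ++ A, h.append_comm, (List.perm_append_comm (l₁ := s :: B)).map _⟩

def revStep (s : Step V) : Step V := (stepTgt s, stepCol s, stepSrc s)

theorem map_stepSrc_reverse_map_revStep (L : List (Step V)) :
    ((L.map revStep).reverse).map stepSrc = (L.map stepTgt).reverse := by
  rw [List.map_reverse, List.map_map]
  rfl

theorem IsAltCycle.reverse {L : List (Step V)} (h : G.IsAltCycle L) :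
    G.IsAltCycle (L.map revStep).reverse := by
  have hperm := h.map_stepTgt_perm
  obtain ⟨hne, hadj, hnd, hchain⟩ := isAltCycle_iff.1 h
  refine isAltCycle_iff.2 ⟨by simpa using hne, ?_, ?_, ?_⟩
  · simp only [List.mem_reverse, List.mem_map]
    rintro _ ⟨s, hs, rfl⟩
    exact G.symm _ _ _ (hadj s hs)
  · rw [map_stepSrc_reverse_map_revStep, List.nodup_reverse, hperm.nodup_iff]
    exact hnd
  · rw [← Cycle.reverse_coe, Cycle.chain_reverse, ← Cycle.map_coe, Cycle.chain_map]
    exact hchain.imp fun _ _ hab => ⟨hab.1.symm, hab.2.symm⟩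

theorem IsAltCycle.exists_cons_of_visits {L : List (Step V)} (h : G.IsAltCycle L) {v : V}
    (hv : visits L v) (c : Bool) :
    ∃ s T, G.IsAltCycle (s :: T) ∧ stepSrc s = v ∧ stepCol s = c ∧
      ∀ w, visits (s :: T) w ↔ visits L w := by
  obtain ⟨s, hs, rfl⟩ := List.mem_map.1 (h.visits_iff.1 hv)
  obtain ⟨T, hC, hperm⟩ := h.exists_cons_of_mem hs
  have hvisits : ∀ w, visits (s :: T) w ↔ visits L w := fun w => by
    rw [hC.visits_iff, h.visits_iff, hperm.mem_iff]
  by_cases hc : stepCol s = c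
  · exact ⟨s, T, hC, rfl, hc, hvisits⟩
  set t := (s :: T).getLast (List.cons_ne_nil s T)
  have hts : Alternates t s := hC.alternates_getLast
  have hmem : revStep t ∈ ((s :: T).map revStep).reverse :=
    List.mem_reverse.2 (List.mem_map_of_mem (List.getLast_mem _))
  obtain ⟨T', hC', hperm'⟩ := hC.reverse.exists_cons_of_mem hmem
  refine ⟨revStep t, T', hC', hts.1, ?_, fun w => ?_⟩
  · exact (Bool.eq_not_of_ne hts.2).trans (Bool.eq_not_of_ne (Ne.symm hc)).symm
  · rw [hC'.visits_iff, hperm'.mem_iff, map_stepSrc_reverse_map_revStep, List.mem_reverse,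
      hC.map_stepTgt_perm.mem_iff, ← hC.visits_iff, hvisits]

def setSrc (s : Step V) (v : V) : Step V := (v, stepCol s, stepTgt s)

theorem map_stepSrc_splice_perm (s₁ s₂ : Step V) (T₁ T₂ : List (Step V)) :
    (setSrc s₂ (stepSrc s₁) :: (T₂ ++ setSrc s₁ (stepSrc s₂) :: T₁)).map stepSrc ~
      (s₁ :: T₁).map stepSrc ++ (s₂ :: T₂).map stepSrc := by
  simp only [List.map_cons, List.map_append]
  exact (List.perm_append_comm.trans List.perm_middle.symm).cons _

theorem IsAltCycle.splice {s₁ s₂ : Step V} {T₁ T₂ : List (Step V)}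
    (h₁ : G.IsAltCycle (s₁ :: T₁)) (h₂ : G.IsAltCycle (s₂ :: T₂))
    (hcol : stepCol s₁ = stepCol s₂)
    (hdisj : ((s₁ :: T₁).map stepSrc).Disjoint ((s₂ :: T₂).map stepSrc))
    (hadj : ∀ c w, G.adj c (stepSrc s₁) w ↔ G.adj c (stepSrc s₂) w) :
    G.IsAltCycle (setSrc s₂ (stepSrc s₁) :: (T₂ ++ setSrc s₁ (stepSrc s₂) :: T₁)) := by
  obtain ⟨-, hadj₁, hnd₁, hchain₁⟩ := isAltCycle_iff.1 h₁
  obtain ⟨-, hadj₂, hnd₂, hchain₂⟩ := isAltCycle_iff.1 h₂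
  refine isAltCycle_iff.2 ⟨by simp, fun s hs => ?_, ?_, ?_⟩
  · simp only [List.mem_cons, List.mem_append] at hs
    rcases hs with rfl | hs | rfl | hs
    · exact (hadj _ _).2 (hadj₂ s₂ List.mem_cons_self)
    · exact hadj₂ s (List.mem_cons_of_mem _ hs)
    · exact (hadj _ _).1 (hadj₁ s₁ List.mem_cons_self)
    · exact hadj₁ s (List.mem_cons_of_mem _ hs)
  · exact (map_stepSrc_splice_perm s₁ s₂ T₁ T₂).nodup_iff.2 (hnd₁.append hnd₂ hdisj)
  · rw [Cycle.chain_coe_cons] at hchain₁ hchain₂ ⊢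
    have hleft := hchain₂.imp_ends (a' := setSrc s₂ (stepSrc s₁))
      (b' := setSrc s₁ (stepSrc s₂)) id fun h => ⟨h.1, hcol ▸ h.2⟩
    have hright := hchain₁.imp_ends (a' := setSrc s₁ (stepSrc s₂))
      (b' := setSrc s₂ (stepSrc s₁)) id fun h => ⟨h.1, hcol ▸ h.2⟩
    simpa using List.IsChain.append_overlap (l₁ := setSrc s₂ (stepSrc s₁) :: T₂)
      (l₂ := [setSrc s₁ (stepSrc s₂)]) (l₃ := T₁ ++ [setSrc s₂ (stepSrc s₁)]) hleft hright (by simp)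

end TwoEC

open TwoEC in
theorem merge_cycles_of_similar_vertices {V : Type} (G : TwoEC V)
    (C₁ C₂ : List (Step V)) (h₁ : G.IsAltCycle C₁) (h₂ : G.IsAltCycle C₂)
    (hdisj : ∀ v : V, ¬ (visits C₁ v ∧ visits C₂ v))
    (x y : V) (hx : visits C₁ x) (hy : visits C₂ y) (hsim : G.Similar x y) :
    ∃ C, G.IsAltCycle C ∧ ∀ v : V, (visits C v ↔ visits C₁ v ∨ visits C₂ v) := by
  obtain ⟨s₁, T₁, hC₁, rfl, hcol₁, hvisits₁⟩ := h₁.exists_cons_of_visits hx false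
  obtain ⟨s₂, T₂, hC₂, rfl, hcol₂, hvisits₂⟩ := h₂.exists_cons_of_visits hy false
  have hdisj' : ((s₁ :: T₁).map stepSrc).Disjoint ((s₂ :: T₂).map stepSrc) := fun v hv₁ hv₂ =>
    hdisj v ⟨(hvisits₁ v).1 (hC₁.visits_iff.2 hv₁), (hvisits₂ v).1 (hC₂.visits_iff.2 hv₂)⟩
  have hC := hC₁.splice hC₂ (hcol₁.trans hcol₂.symm) hdisj' hsim.2
  refine ⟨_, hC, fun v => ?_⟩
  rw [hC.visits_iff, (map_stepSrc_splice_perm s₁ s₂ T₁ T₂).mem_iff, List.mem_append,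
    ← hC₁.visits_iff, ← hC₂.visits_iff, hvisits₁, hvisits₂]
end

section
/- Let G be a connected 2-edge-coloured graph and let x,y be distinct vertices. For any colours c1,c2 in {1,2}, there is an alternating (x,y)-trail starting with colour c1 and ending with colour c2 in G if and only if there is an alternating (x_1,y_1)-path starting with colour c1 and ending with colour c2 in the auxiliary graph H, where H has vertex set {u_1,u_2 : u ∈ V(G)} ∪ {u_{uv}, v_{uv} : uv ∈ E(G)}, and for each edge uv of colour c in G, H contains edges u_1u_{uv}, u_2u_{uv}, v_1v_{uv}, v_2v_{uv} of colour c and the edge u_{uv}v_{uv} of colour 3−c. -/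
namespace TwoEC

/-- Vertices of the auxiliary graph `H`: `Sum.inl (u, i)` is the vertex `uᵢ`
(`i ∈ {1,2}` encoded by `Bool`), and `Sum.inr ⟨(u, c, e), _⟩` is the vertex
`u_{uv}` where `e = {u,v}` is an edge of `G` of colour `c` with `u ∈ e`. -/
def AuxTV {V : Type} (G : TwoEC V) : Type :=
  (V × Bool) ⊕
  {p : V × Bool × Sym2 V // p.1 ∈ p.2.2 ∧ ∃ a b, G.adj p.2.1 a b ∧ p.2.2 = Sym2.mk a b}

/-- One-sided description of the coloured edges of `H`: for each edge `uv` of `G`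
of colour `c`, the edges `u₁u_{uv}, u₂u_{uv}, v₁v_{uv}, v₂v_{uv}` of colour `c`
and the edge `u_{uv}v_{uv}` of colour `3 − c` (i.e. `!c`). -/
def auxTBase {V : Type} (G : TwoEC V) : Bool → AuxTV G → AuxTV G → Prop
  | c, Sum.inl u, Sum.inr p => c = p.1.2.1 ∧ p.1.1 = u.1
  | c, Sum.inr p, Sum.inr q =>
      p.1.2.2 = q.1.2.2 ∧ p.1.2.1 = q.1.2.1 ∧ p.1.1 ≠ q.1.1 ∧ c = !p.1.2.1
  | _, _, _ => False

/-- The auxiliary 2-edge-coloured graph `H` of the trail-to-path reduction. -/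
def auxTrailGraph {V : Type} (G : TwoEC V) : TwoEC (AuxTV G) where
  adj c a b := auxTBase G c a b ∨ auxTBase G c b a
  symm := fun _ _ _ h => h.symm
  loopless := fun c v h => by
    rcases v with u | p
    · rcases h with h | h <;> exact h
    · rcases h with h | h <;> exact h.2.2.1 rfl

end TwoEC

/-!
Say a walk is in state `(v, c)` after a step that reaches `v` with colour `c`, and starts in state
`(x, !c₁)`. If an alternating `(x, y)`-trail passes twice through a state, cutting out the closed
piece in between leaves such a trail with the same first and last colours; so a shortest one
repeats no state. Each vertex then occurs in at most two states, differing in the colour, and the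
end states are `(x, !c₁)` and `(y, c₂)`. Sending state `(v, c)` to a copy of `v` chosen injectively
in `c`, with `x₁` and `y₁` at the ends, turns the trail into a path of `G × {1, 2}` whose projection
repeats no edge. Replacing each step `uᵢ → wⱼ` of colour `c` by `uᵢ, u_{uw}, w_{uw}, wⱼ` turns these
paths into exactly the alternating `(x₁, y₁)`-paths of `H`: from `u_{uw}` the alternation of colours
leaves no choice but `w_{uw}` and then a copy of `w`, and two steps share a vertex `u_{uw}` only if
they use the same edge.
-/

theorem List.IsChain.exists_shortcut {α β : Type*} {R : α → α → Prop} {f : α → β}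
    (hR : ∀ a b c, f a = f b → R b c → R a c) {l : List α} (hl : l.IsChain R)
    (hdup : ¬ (l.map f).Nodup) :
    ∃ l' : List α, l'.Sublist l ∧ l'.length < l.length ∧ l'.head? = l.head? ∧
      l'.getLast?.map f = l.getLast?.map f ∧ l'.IsChain R := by
  induction l with
  | nil => simp at hdup
  | cons x l ih =>
    rw [List.map_cons, List.nodup_cons, not_and_or, not_not] at hdup
    rcases hdup with hx | hdup
    · obtain ⟨t, ht, hft⟩ := List.mem_map.1 hx
      obtain ⟨B, C, rfl⟩ := List.append_of_mem ht
      refine ⟨x :: C,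
        ((List.sublist_cons_self t C).trans (List.sublist_append_right B _)).cons_cons x,
        by simp, rfl, ?_, ?_⟩
      · rcases C.eq_nil_or_concat with rfl | ⟨C, c, rfl⟩ <;> simp [List.getLast?_cons, hft]
      · exact (hl.suffix ⟨x :: B, by simp⟩).imp_head fun h => hR x t _ hft.symm h
    · obtain ⟨l', hsub, hlen, hhead, hlast, hch⟩ := ih hl.tail hdup
      refine ⟨x :: l', hsub.cons_cons x, by simpa using hlen, rfl, ?_, ?_⟩
      · rcases l' with _ | ⟨y, l'⟩
        · rcases l with _ | ⟨z, l⟩ <;> simp_all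
        · rcases l with _ | ⟨z, l⟩ <;> simp_all [List.getLast?_cons_cons]
      · rw [List.isChain_cons] at hl ⊢
        exact ⟨hhead ▸ hl.1, hch⟩

namespace TwoEC

variable {V : Type} {G : TwoEC V}

theorem isAltWalk_iff {u v : V} {L : List (Step V)} :
    G.IsAltWalk u v L ↔
      L ≠ [] ∧ L.head?.map stepSrc = some u ∧ L.getLast?.map stepTgt = some v ∧
        (∀ s ∈ L, G.adj (stepCol s) (stepSrc s) (stepTgt s)) ∧
        L.IsChain (fun s t => stepTgt s = stepSrc t ∧ stepCol s ≠ stepCol t) :=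
  Iff.rfl

theorem isAltWalk_singleton {u v : V} {s : Step V} :
    G.IsAltWalk u v [s] ↔
      stepSrc s = u ∧ stepTgt s = v ∧ G.adj (stepCol s) (stepSrc s) (stepTgt s) := by
  simp [isAltWalk_iff, and_comm]

theorem isAltWalk_cons_cons {u v : V} {s t : Step V} {L : List (Step V)} :
    G.IsAltWalk u v (s :: t :: L) ↔
      stepSrc s = u ∧ G.adj (stepCol s) (stepSrc s) (stepTgt s) ∧
        stepTgt s = stepSrc t ∧ stepCol s ≠ stepCol t ∧
          G.IsAltWalk (stepTgt s) v (t :: L) := by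
  simp only [isAltWalk_iff, List.isChain_cons_cons, List.getLast?_cons_cons, List.mem_cons,
    forall_eq_or_imp, List.head?_cons, Option.map_some, Option.some.injEq, ne_eq,
    reduceCtorEq, not_false_eq_true, true_and]
  grind

theorem IsAltWalk.map_stepSrc_append {u v : V} {L : List (Step V)} (h : G.IsAltWalk u v L) :
    L.map stepSrc ++ [v] = u :: L.map stepTgt := by
  induction L generalizing u with
  | nil => exact absurd rfl h.1
  | cons s L ih =>
    rcases L with _ | ⟨t, L⟩
    · obtain ⟨rfl, rfl, -⟩ := isAltWalk_singleton.1 h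
      rfl
    · obtain ⟨rfl, -, -, -, h'⟩ := isAltWalk_cons_cons.1 h
      rw [List.map_cons, List.cons_append, ih h']
      rfl

theorem IsAltWalk.append {u v w : V} {L₁ L₂ : List (Step V)} (h₁ : G.IsAltWalk u v L₁)
    (h₂ : G.IsAltWalk v w L₂) (hc : lastColour L₁ ≠ firstColour L₂) :
    G.IsAltWalk u w (L₁ ++ L₂) := by
  obtain ⟨hne₁, hh₁, hl₁, hadj₁, hch₁⟩ := h₁
  obtain ⟨hne₂, hh₂, hl₂, hadj₂, hch₂⟩ := h₂
  refine ⟨by simp [hne₁], by rwa [List.head?_append_of_ne_nil _ hne₁],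
    by rwa [List.getLast?_append_of_ne_nil _ hne₂], ?_,
    List.isChain_append.2 ⟨hch₁, hch₂, ?_⟩⟩
  · intro s hs
    rcases List.mem_append.1 hs with hs | hs
    exacts [hadj₁ s hs, hadj₂ s hs]
  · intro s hs t ht
    rw [Option.mem_def] at hs ht
    simp only [hs, ht, Option.map_some, Option.some.injEq, lastColour, firstColour]
      at hl₁ hh₂ hc
    exact ⟨hl₁.trans hh₂.symm, fun h => hc (congrArg some h)⟩

theorem adj_comm {c : Bool} {u v : V} : G.adj c u v ↔ G.adj c v u :=
  ⟨G.symm c u v, G.symm c v u⟩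

def arrival (s : Step V) : V × Bool := (stepTgt s, stepCol s)

/-- The virtual loop `(x, !c₁, x)` in front encodes both the start and the first colour. -/
theorem isAltWalk_and_colours_iff {x y : V} {c₁ c₂ : Bool} {T : List (Step V)} :
    (G.IsAltWalk x y T ∧ firstColour T = some c₁ ∧ lastColour T = some c₂) ↔
      T ≠ [] ∧ (∀ s ∈ T, G.adj (stepCol s) (stepSrc s) (stepTgt s)) ∧
        ((x, !c₁, x) :: T).IsChain
          (fun s t => stepTgt s = stepSrc t ∧ stepCol s ≠ stepCol t) ∧
        T.getLast?.map arrival = some (y, c₂) := by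
  rcases T with _ | ⟨s, T⟩
  · simp [isAltWalk_iff]
  have hlast : ∀ o : Option (Step V), (o.map stepTgt = some y ∧ o.map stepCol = some c₂) ↔
      o.map arrival = some (y, c₂) := by
    rintro (_ | t) <;> simp [arrival]
  rw [isAltWalk_iff, List.isChain_cons_cons, ← hlast]
  simp only [firstColour, lastColour, List.head?_cons, Option.map_some, Option.some.injEq, ne_eq,
    reduceCtorEq, not_false_eq_true, stepTgt, stepCol, eq_comm (a := x)]
  have hc : (¬(!c₁) = s.2.1) ↔ s.2.1 = c₁ := by cases c₁ <;> cases s.2.1 <;> simp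
  rw [hc]
  tauto

theorem exists_altTrail_nodup_arrivals {x y : V} (hxy : x ≠ y) {c₁ c₂ : Bool}
    {T : List (Step V)} (hT : G.IsAltTrail x y T) (h₁ : firstColour T = some c₁)
    (h₂ : lastColour T = some c₂) :
    ∃ T', (G.IsAltTrail x y T' ∧ firstColour T' = some c₁ ∧ lastColour T' = some c₂) ∧
      ((x, !c₁) :: T'.map arrival).Nodup := by
  induction' hn : T.length using Nat.strong_induction_on with n ih generalizing T
  by_cases hnd : ((x, !c₁) :: T.map arrival).Nodup
  · exact ⟨T, ⟨hT, h₁, h₂⟩, hnd⟩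
  obtain ⟨hne, hadj, hch, hlast⟩ := isAltWalk_and_colours_iff.1 ⟨hT.1, h₁, h₂⟩
  obtain ⟨_ | ⟨p, T'⟩, hsub, hlen, hhead, hlast', hch'⟩ :=
    hch.exists_shortcut (f := arrival) (fun a b c hab h => by
      simp only [arrival, Prod.mk.injEq] at hab
      exact ⟨hab.1 ▸ h.1, hab.2 ▸ h.2⟩) hnd
  · simp at hhead
  obtain rfl : p = (x, !c₁, x) := by simpa using hhead
  rw [List.getLast?_cons_of_ne_nil hne, hlast] at hlast'
  have hT' : T' ≠ [] := by
    rintro rfl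
    simp [arrival, stepTgt] at hlast'
    exact hxy hlast'.1
  rw [List.getLast?_cons_of_ne_nil hT'] at hlast'
  have hsub' : T'.Sublist T := List.cons_sublist_cons.1 hsub
  obtain ⟨hw', h₁', h₂'⟩ := isAltWalk_and_colours_iff.2
    ⟨hT', fun s hs => hadj s (hsub'.subset hs), hch', hlast'⟩
  exact ih T'.length (by simp [← hn] at hlen ⊢; omega) ⟨hw', hT.2.sublist (hsub'.map _)⟩
    h₁' h₂' rfl

theorem firstColour_map {W : Type} {f : Step V → Step W} (hf : ∀ s, stepCol (f s) = stepCol s)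
    (L : List (Step V)) : firstColour (L.map f) = firstColour L := by
  cases L <;> simp [firstColour, hf]

theorem lastColour_map {W : Type} {f : Step V → Step W} (hf : ∀ s, stepCol (f s) = stepCol s)
    (L : List (Step V)) : lastColour (L.map f) = lastColour L := by
  simp [lastColour, List.getLast?_map, Option.map_map, Function.comp_def, hf]

/-- `(v, i)` is the copy `vᵢ` of `v`. -/
def double (G : TwoEC V) : TwoEC (V × Bool) where
  adj c a b := G.adj c a.1 b.1
  symm c a b := G.symm c a.1 b.1
  loopless c a := G.loopless c a.1

def proj (s : Step (V × Bool)) : Step V := ((stepSrc s).1, stepCol s, (stepTgt s).1)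

theorem stepCol_proj (s : Step (V × Bool)) : stepCol (proj s) = stepCol s := rfl

theorem IsAltWalk.map_proj {a b : V × Bool} {W : List (Step (V × Bool))}
    (h : G.double.IsAltWalk a b W) : G.IsAltWalk a.1 b.1 (W.map proj) := by
  obtain ⟨hne, hh, hl, hadj, hch⟩ := h
  refine ⟨by simpa using hne, ?_, ?_, ?_, ?_⟩
  · obtain ⟨s, hs, rfl⟩ := Option.map_eq_some_iff.1 hh
    rw [List.head?_map, hs]
    rfl
  · obtain ⟨s, hs, rfl⟩ := Option.map_eq_some_iff.1 hl
    rw [List.getLast?_map, hs]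
    rfl
  · exact List.forall_mem_map.2 hadj
  · exact (List.isChain_map proj).2 (hch.imp fun s t h => ⟨congrArg Prod.fst h.1, h.2⟩)

/-- The lift of a step to `double G` that reaches `v` with colour `c` in the copy `κ (v, c)`; it
leaves from the copy the previous step arrived at, because colours alternate. -/
def doubleStep (κ : V × Bool → Bool) (s : Step V) : Step (V × Bool) :=
  ((stepSrc s, κ (stepSrc s, !stepCol s)), stepCol s, (stepTgt s, κ (arrival s)))

theorem stepCol_doubleStep (κ : V × Bool → Bool) (s : Step V) :
    stepCol (doubleStep κ s) = stepCol s := rfl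

theorem map_proj_map_doubleStep (κ : V × Bool → Bool) (T : List (Step V)) :
    (T.map (doubleStep κ)).map proj = T := by
  rw [List.map_map]
  exact List.map_id T

theorem IsAltWalk.map_doubleStep (κ : V × Bool → Bool) {u v : V} {c₁ c₂ : Bool}
    {T : List (Step V)} (h : G.IsAltWalk u v T) (h₁ : firstColour T = some c₁)
    (h₂ : lastColour T = some c₂) :
    G.double.IsAltWalk (u, κ (u, !c₁)) (v, κ (v, c₂)) (T.map (doubleStep κ)) := by
  obtain ⟨hne, hh, hl, hadj, hch⟩ := h
  refine ⟨by simpa using hne, ?_, ?_, List.forall_mem_map.2 hadj, ?_⟩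
  · obtain ⟨s, hs, rfl⟩ := Option.map_eq_some_iff.1 hh
    obtain ⟨s', hs', rfl⟩ := Option.map_eq_some_iff.1 h₁
    cases hs.symm.trans hs'
    rw [List.head?_map, hs]
    rfl
  · obtain ⟨s, hs, rfl⟩ := Option.map_eq_some_iff.1 hl
    obtain ⟨s', hs', rfl⟩ := Option.map_eq_some_iff.1 h₂
    cases hs.symm.trans hs'
    rw [List.getLast?_map, hs]
    rfl
  · refine (List.isChain_map _).2 (hch.imp fun s t h => ⟨?_, h.2⟩)
    simp only [doubleStep, arrival, stepSrc, stepTgt, stepCol] at h ⊢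
    rw [h.1, Bool.eq_not_of_ne h.2]

theorem isAltPath_double_map_doubleStep {κ : V × Bool → Bool}
    (hκ : Function.Injective fun p => (p.1, κ p)) {u v : V} {c₁ c₂ : Bool} {T : List (Step V)}
    (hT : G.IsAltWalk u v T) (h₁ : firstColour T = some c₁) (h₂ : lastColour T = some c₂)
    (hnd : ((u, !c₁) :: T.map arrival).Nodup) :
    G.double.IsAltPath (u, κ (u, !c₁)) (v, κ (v, c₂)) (T.map (doubleStep κ)) := by
  have hW := hT.map_doubleStep κ h₁ h₂
  refine ⟨hW, ?_⟩
  rw [hW.map_stepSrc_append]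
  convert hnd.map hκ using 1
  simp [doubleStep, arrival, stepTgt, stepCol]

theorem exists_copyIndex {x y : V} (hxy : x ≠ y) (c₁ c₂ : Bool) :
    ∃ κ : V × Bool → Bool, (Function.Injective fun p => (p.1, κ p)) ∧
      κ (x, !c₁) = false ∧ κ (y, c₂) = false := by
  classical
  refine ⟨fun p => xor p.2 (if p.1 = x then !c₁ else c₂), ?_, by simp, by simp [hxy.symm]⟩
  rintro ⟨u, c⟩ ⟨u', c'⟩ h
  simp only [Prod.mk.injEq] at h
  obtain ⟨rfl, h⟩ := h
  simpa using h

def copyVertex (G : TwoEC V) (a : V × Bool) : AuxTV G := Sum.inl a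

theorem copyVertex_injective : Function.Injective G.copyVertex := Sum.inl_injective

open Classical in
/-- The vertex `u_{uw}` of `H` for the `c`-coloured edge `uw` (junk if there is no such edge). -/
noncomputable def edgeEnd (G : TwoEC V) (c : Bool) (u w : V) : AuxTV G :=
  if h : G.adj c u w then Sum.inr ⟨(u, c, s(u, w)), Sym2.mem_mk_left u w, u, w, h, rfl⟩
  else Sum.inl (u, c)

theorem edgeEnd_of_adj {c : Bool} {u w : V} (h : G.adj c u w) :
    G.edgeEnd c u w = Sum.inr ⟨(u, c, s(u, w)), Sym2.mem_mk_left u w, u, w, h, rfl⟩ :=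
  dif_pos h

theorem edgeEnd_inj {c c' : Bool} {u w u' w' : V} (h : G.adj c u w) (h' : G.adj c' u' w') :
    G.edgeEnd c u w = G.edgeEnd c' u' w' ↔ c = c' ∧ u = u' ∧ w = w' := by
  rw [edgeEnd_of_adj h, edgeEnd_of_adj h']
  constructor
  · intro he
    have := congrArg Subtype.val (Sum.inr_injective he)
    simp only [Prod.mk.injEq] at this
    obtain ⟨rfl, rfl, hw⟩ := this
    exact ⟨rfl, rfl, Sym2.congr_right.1 hw⟩
  · rintro ⟨rfl, rfl, rfl⟩
    rfl

theorem edgeEnd_ne_copyVertex {c : Bool} {u w : V} (h : G.adj c u w) (a : V × Bool) :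
    G.edgeEnd c u w ≠ G.copyVertex a := by
  rw [edgeEnd_of_adj h]
  exact Sum.inr_ne_inl

theorem auxTV_cases (z : AuxTV G) :
    (∃ a, z = G.copyVertex a) ∨ ∃ c u w, G.adj c u w ∧ z = G.edgeEnd c u w := by
  rcases z with a | ⟨⟨u, c, e⟩, hu, a, b, hab, he⟩
  · exact Or.inl ⟨a, rfl⟩
  · dsimp only at hu hab he
    subst he
    refine Or.inr ⟨c, ?_⟩
    rcases Sym2.mem_iff.1 hu with rfl | rfl
    · exact ⟨u, b, hab, by rw [edgeEnd_of_adj hab]⟩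
    · exact ⟨u, a, G.symm _ _ _ hab, by
      rw [edgeEnd_of_adj (G.symm _ _ _ hab)]
      exact congrArg _ (Subtype.ext (Prod.ext rfl (Prod.ext rfl Sym2.eq_swap)))⟩

theorem not_auxAdj_copyVertex_copyVertex {c : Bool} {a b : V × Bool} :
    ¬ (auxTrailGraph G).adj c (G.copyVertex a) (G.copyVertex b) := by
  simp [auxTrailGraph, auxTBase, copyVertex]

theorem auxAdj_copyVertex_edgeEnd {c c' : Bool} {a : V × Bool} {u w : V} (h : G.adj c' u w) :
    (auxTrailGraph G).adj c (G.copyVertex a) (G.edgeEnd c' u w) ↔ c = c' ∧ u = a.1 := by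
  simp [auxTrailGraph, auxTBase, copyVertex, edgeEnd_of_adj h]

theorem auxAdj_edgeEnd_edgeEnd {c c₁ c₂ : Bool} {u w u' w' : V} (h : G.adj c₁ u w)
    (h' : G.adj c₂ u' w') :
    (auxTrailGraph G).adj c (G.edgeEnd c₁ u w) (G.edgeEnd c₂ u' w') ↔
      c₂ = c₁ ∧ c = !c₁ ∧ u' = w ∧ w' = u := by
  have huw : u ≠ w := fun he => G.loopless c₁ w (he ▸ h)
  simp only [auxTrailGraph, auxTBase, edgeEnd_of_adj h, edgeEnd_of_adj h']
  rw [eq_comm (a := s(u', w')), Sym2.eq_iff]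
  grind

theorem auxAdj_copyVertex_iff {c : Bool} {a : V × Bool} {z : AuxTV G} :
    (auxTrailGraph G).adj c (G.copyVertex a) z ↔
      ∃ w, G.adj c a.1 w ∧ z = G.edgeEnd c a.1 w := by
  rcases auxTV_cases z with ⟨b, rfl⟩ | ⟨c', u, w, h, rfl⟩
  · simp only [not_auxAdj_copyVertex_copyVertex, false_iff, not_exists, not_and]
    exact fun w hw he => edgeEnd_ne_copyVertex hw b he.symm
  · rw [auxAdj_copyVertex_edgeEnd h]
    constructor
    · rintro ⟨rfl, rfl⟩
      exact ⟨w, h, rfl⟩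
    · rintro ⟨w', hw', he⟩
      obtain ⟨rfl, rfl, -⟩ := (edgeEnd_inj h hw').1 he
      exact ⟨rfl, rfl⟩

theorem auxAdj_edgeEnd_iff {c c' : Bool} {u w : V} (h : G.adj c u w) {z : AuxTV G} :
    (auxTrailGraph G).adj c' (G.edgeEnd c u w) z ↔
      (c' = !c ∧ z = G.edgeEnd c w u) ∨ (c' = c ∧ ∃ j, z = G.copyVertex (u, j)) := by
  rcases auxTV_cases z with ⟨b, rfl⟩ | ⟨c₂, u', w', h', rfl⟩
  · refine adj_comm.trans ((auxAdj_copyVertex_edgeEnd h).trans ⟨?_, ?_⟩)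
    · rintro ⟨rfl, rfl⟩
      exact Or.inr ⟨rfl, b.2, rfl⟩
    · rintro (⟨-, he⟩ | ⟨rfl, j, he⟩)
      · exact absurd he.symm (edgeEnd_ne_copyVertex (G.symm _ _ _ h) b)
      · exact ⟨rfl, congrArg Prod.fst (copyVertex_injective he).symm⟩
  · rw [auxAdj_edgeEnd_edgeEnd h h', edgeEnd_inj h' (G.symm _ _ _ h)]
    simp only [(edgeEnd_ne_copyVertex h' _), exists_false, and_false, or_false]
    tauto

/-- The path `uᵢ, u_{uw}, w_{uw}, wⱼ` of `H` replacing a step from `uᵢ` to `wⱼ` of `double G`. -/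
noncomputable def liftStep (G : TwoEC V) (s : Step (V × Bool)) : List (Step (AuxTV G)) :=
  [(G.copyVertex (stepSrc s), stepCol s, G.edgeEnd (stepCol s) (stepSrc s).1 (stepTgt s).1),
    (G.edgeEnd (stepCol s) (stepSrc s).1 (stepTgt s).1, !stepCol s,
      G.edgeEnd (stepCol s) (stepTgt s).1 (stepSrc s).1),
    (G.edgeEnd (stepCol s) (stepTgt s).1 (stepSrc s).1, stepCol s, G.copyVertex (stepTgt s))]

theorem isAltWalk_liftStep {s : Step (V × Bool)}
    (hs : G.double.adj (stepCol s) (stepSrc s) (stepTgt s)) :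
    (auxTrailGraph G).IsAltWalk (G.copyVertex (stepSrc s)) (G.copyVertex (stepTgt s))
      (G.liftStep s) := by
  have hs : G.adj (stepCol s) (stepSrc s).1 (stepTgt s).1 := hs
  have hs' : G.adj (stepCol s) (stepTgt s).1 (stepSrc s).1 := G.symm _ _ _ hs
  refine isAltWalk_cons_cons.2 ⟨rfl, (auxAdj_copyVertex_edgeEnd hs).2 ⟨rfl, rfl⟩, rfl,
    by simp [stepCol], isAltWalk_cons_cons.2 ⟨rfl, ?_, rfl, by simp [stepCol],
      isAltWalk_singleton.2 ⟨rfl, rfl, ?_⟩⟩⟩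
  · exact (auxAdj_edgeEnd_edgeEnd hs hs').2 ⟨rfl, rfl, rfl, rfl⟩
  · exact adj_comm.1 ((auxAdj_copyVertex_edgeEnd hs').2 ⟨rfl, rfl⟩)

theorem firstColour_flatMap_liftStep (W : List (Step (V × Bool))) :
    firstColour (W.flatMap G.liftStep) = firstColour W := by
  cases W <;> simp [firstColour, liftStep, stepCol]

theorem lastColour_flatMap_liftStep (W : List (Step (V × Bool))) :
    lastColour (W.flatMap G.liftStep) = lastColour W := by
  induction W using List.reverseRecOn <;> simp [lastColour, liftStep, stepCol]

theorem IsAltWalk.flatMap_liftStep {a b : V × Bool} {W : List (Step (V × Bool))}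
    (h : G.double.IsAltWalk a b W) :
    (auxTrailGraph G).IsAltWalk (G.copyVertex a) (G.copyVertex b) (W.flatMap G.liftStep) := by
  induction W generalizing a with
  | nil => exact absurd rfl h.1
  | cons s W ih =>
    rcases W with _ | ⟨t, W⟩
    · obtain ⟨rfl, rfl, hs⟩ := isAltWalk_singleton.1 h
      simpa using isAltWalk_liftStep hs
    · obtain ⟨rfl, hs, hst, hc, h'⟩ := isAltWalk_cons_cons.1 h
      rw [List.flatMap_cons]
      refine (isAltWalk_liftStep hs).append (ih h') ?_
      simpa [firstColour_flatMap_liftStep, lastColour, firstColour, liftStep, stepCol] using hc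

theorem exists_eq_flatMap_liftStep {a b : V × Bool} {P : List (Step (AuxTV G))}
    (h : (auxTrailGraph G).IsAltWalk (G.copyVertex a) (G.copyVertex b) P) :
    ∃ W, G.double.IsAltWalk a b W ∧ P = W.flatMap G.liftStep := by
  induction' hn : P.length using Nat.strong_induction_on with n ih generalizing P a
  rcases P with
    _ | ⟨⟨z₀, c, z₁⟩, _ | ⟨⟨z₁', c', z₂⟩, _ | ⟨⟨z₂', c'', z₃⟩, P⟩⟩⟩
  · exact absurd rfl h.1
  · obtain ⟨rfl, rfl, had⟩ := isAltWalk_singleton.1 h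
    exact (not_auxAdj_copyVertex_copyVertex had).elim
  · obtain ⟨rfl, had₁, rfl, hc₁, h₁⟩ := isAltWalk_cons_cons.1 h
    dsimp only [stepSrc, stepTgt, stepCol] at had₁ hc₁ h₁
    obtain ⟨w, hw, rfl⟩ := auxAdj_copyVertex_iff.1 had₁
    obtain ⟨-, rfl, had₂⟩ := isAltWalk_singleton.1 h₁
    rcases (auxAdj_edgeEnd_iff hw).1 had₂ with ⟨-, he⟩ | ⟨hc, -⟩
    exacts [absurd he.symm (edgeEnd_ne_copyVertex (G.symm _ _ _ hw) b), absurd hc.symm hc₁]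
  obtain ⟨rfl, had₁, rfl, hc₁, h₁⟩ := isAltWalk_cons_cons.1 h
  dsimp only [stepSrc, stepTgt, stepCol] at had₁ hc₁ h₁
  obtain ⟨w, hw, rfl⟩ := auxAdj_copyVertex_iff.1 had₁
  obtain ⟨-, had₂, rfl, hc₂, h₂⟩ := isAltWalk_cons_cons.1 h₁
  dsimp only [stepSrc, stepTgt, stepCol] at had₂ hc₂ h₂
  rcases (auxAdj_edgeEnd_iff hw).1 had₂ with ⟨rfl, rfl⟩ | ⟨rfl, -⟩
  swap
  · exact absurd rfl hc₁
  have had₃ := h₂.2.2.2.1 _ List.mem_cons_self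
  dsimp only [stepSrc, stepTgt, stepCol] at had₃
  rcases (auxAdj_edgeEnd_iff (G.symm _ _ _ hw)).1 had₃ with ⟨rfl, -⟩ | ⟨rfl, j, rfl⟩
  · simp at hc₂
  rcases P with _ | ⟨st, P⟩
  · obtain ⟨-, hb, -⟩ := isAltWalk_singleton.1 h₂
    exact ⟨[(a, c'', (w, j))], isAltWalk_singleton.2 ⟨rfl, copyVertex_injective hb, hw⟩, rfl⟩
  obtain ⟨-, -, hst, hc, h₃⟩ := isAltWalk_cons_cons.1 h₂
  obtain ⟨_ | ⟨t, W⟩, hW, hP⟩ := ih _ (by simp [← hn]) h₃ rfl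
  · simp at hP
  simp only [List.flatMap_cons, liftStep, List.cons_append, List.cons.injEq] at hP
  obtain ⟨rfl, rfl⟩ := hP
  exact ⟨(a, c'', (w, j)) :: t :: W,
    isAltWalk_cons_cons.2 ⟨rfl, hw, copyVertex_injective hst, hc, hW⟩, rfl⟩

noncomputable def edgeEnds (G : TwoEC V) (s : Step V) : List (AuxTV G) :=
  [G.edgeEnd (stepCol s) (stepSrc s) (stepTgt s), G.edgeEnd (stepCol s) (stepTgt s) (stepSrc s)]

theorem disjoint_edgeEnds_iff {s t : Step V} (hs : G.adj (stepCol s) (stepSrc s) (stepTgt s))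
    (ht : G.adj (stepCol t) (stepSrc t) (stepTgt t)) :
    (G.edgeEnds s).Disjoint (G.edgeEnds t) ↔ stepEdge s ≠ stepEdge t := by
  have hs' := G.symm _ _ _ hs
  have ht' := G.symm _ _ _ ht
  simp only [edgeEnds, List.disjoint_cons_left, List.mem_cons, List.not_mem_nil, or_false,
    List.disjoint_nil_left, and_true, edgeEnd_inj hs ht, edgeEnd_inj hs ht', edgeEnd_inj hs' ht,
    edgeEnd_inj hs' ht', stepEdge, ne_eq, Prod.mk.injEq, Sym2.eq_iff]
  tauto

theorem nodup_edgeEnds {s : Step V} (hs : G.adj (stepCol s) (stepSrc s) (stepTgt s)) :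
    (G.edgeEnds s).Nodup := by
  simp only [edgeEnds, List.nodup_cons, List.mem_singleton, edgeEnd_inj hs (G.symm _ _ _ hs),
    List.not_mem_nil, not_false_eq_true, List.nodup_nil, and_true]
  exact fun ⟨_, he, _⟩ => G.loopless _ _ (he ▸ hs)

theorem nodup_flatMap_edgeEnds_iff {T : List (Step V)}
    (hT : ∀ s ∈ T, G.adj (stepCol s) (stepSrc s) (stepTgt s)) :
    (T.flatMap G.edgeEnds).Nodup ↔ (T.map stepEdge).Nodup := by
  rw [List.nodup_flatMap, and_iff_right fun s hs => nodup_edgeEnds (hT s hs)]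
  exact (List.Pairwise.iff_of_mem fun hs ht => disjoint_edgeEnds_iff (hT _ hs) (hT _ ht)).trans
    List.pairwise_map.symm

theorem map_stepTgt_flatMap_liftStep (W : List (Step (V × Bool))) :
    (W.flatMap G.liftStep).map stepTgt =
      W.flatMap fun s => G.edgeEnds (proj s) ++ [G.copyVertex (stepTgt s)] := by
  simp only [List.map_flatMap]
  rfl

theorem isAltPath_flatMap_liftStep_iff {a b : V × Bool} {W : List (Step (V × Bool))}
    (hW : G.double.IsAltWalk a b W) :
    (auxTrailGraph G).IsAltPath (G.copyVertex a) (G.copyVertex b) (W.flatMap G.liftStep) ↔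
      G.double.IsAltPath a b W ∧ ((W.map proj).map stepEdge).Nodup := by
  have hP := hW.flatMap_liftStep
  simp only [IsAltPath, hP, hW, true_and, hP.map_stepSrc_append, hW.map_stepSrc_append,
    map_stepTgt_flatMap_liftStep]
  have hadj : ∀ s ∈ W.map proj, G.adj (stepCol s) (stepSrc s) (stepTgt s) :=
    hW.map_proj.2.2.2.1
  have hperm : (G.copyVertex a :: W.flatMap fun s =>
      G.edgeEnds (proj s) ++ [G.copyVertex (stepTgt s)]).Perm
      ((a :: W.map stepTgt).map G.copyVertex ++ (W.map proj).flatMap G.edgeEnds) := by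
    have := ((List.flatMap_append_perm W (fun s => G.edgeEnds (proj s))
      fun s => [G.copyVertex (stepTgt s)]).symm.trans List.perm_append_comm).cons (G.copyVertex a)
    simpa only [← List.map_eq_flatMap, List.flatMap_map, List.map_cons, List.map_map,
      List.cons_append, Function.comp_def] using this
  rw [hperm.nodup_iff, List.nodup_append, List.nodup_map_iff copyVertex_injective,
    nodup_flatMap_edgeEnds_iff hadj]
  refine and_congr_right fun _ => and_iff_left ?_
  rintro _ hx y hy
  obtain ⟨v, -, rfl⟩ := List.mem_map.1 hx
  obtain ⟨s, hs, hy⟩ := List.mem_flatMap.1 hy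
  simp only [edgeEnds, List.mem_cons, List.not_mem_nil, or_false] at hy
  rcases hy with rfl | rfl
  exacts [(edgeEnd_ne_copyVertex (hadj s hs) v).symm,
    (edgeEnd_ne_copyVertex (G.symm _ _ _ (hadj s hs)) v).symm]

end TwoEC

open TwoEC in
theorem altTrail_iff_auxPath_general {V : Type} (G : TwoEC V)
    (x y : V) (hxy : x ≠ y) (c₁ c₂ : Bool) :
    (∃ T, G.IsAltTrail x y T ∧ firstColour T = some c₁ ∧ lastColour T = some c₂) ↔
    (∃ P, (auxTrailGraph G).IsAltPath (Sum.inl (x, false)) (Sum.inl (y, false)) P ∧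
      firstColour P = some c₁ ∧ lastColour P = some c₂) := by
  constructor
  · rintro ⟨T, hT, h₁, h₂⟩
    obtain ⟨T, ⟨hT, h₁, h₂⟩, hnd⟩ := exists_altTrail_nodup_arrivals hxy hT h₁ h₂
    obtain ⟨κ, hκ, hx, hy⟩ := exists_copyIndex hxy c₁ c₂
    have hW := isAltPath_double_map_doubleStep hκ hT.1 h₁ h₂ hnd
    rw [hx, hy] at hW
    refine ⟨(T.map (doubleStep κ)).flatMap G.liftStep,
      (isAltPath_flatMap_liftStep_iff hW.1).2 ⟨hW, by rw [map_proj_map_doubleStep]; exact hT.2⟩,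
      ?_, ?_⟩
    · rwa [firstColour_flatMap_liftStep, firstColour_map (stepCol_doubleStep κ)]
    · rwa [lastColour_flatMap_liftStep, lastColour_map (stepCol_doubleStep κ)]
  · rintro ⟨P, hP, h₁, h₂⟩
    obtain ⟨W, hW, rfl⟩ := exists_eq_flatMap_liftStep hP.1
    refine ⟨W.map proj, ⟨hW.map_proj, ((isAltPath_flatMap_liftStep_iff hW).1 hP).2⟩, ?_, ?_⟩
    · rwa [firstColour_map stepCol_proj, ← firstColour_flatMap_liftStep (G := G)]
    · rwa [lastColour_map stepCol_proj, ← lastColour_flatMap_liftStep (G := G)]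

open TwoEC in
theorem altTrail_iff_auxPath {V : Type} (G : TwoEC V) (hconn : G.Connected)
    (x y : V) (hxy : x ≠ y) (c₁ c₂ : Bool) :
    (∃ T, G.IsAltTrail x y T ∧ firstColour T = some c₁ ∧ lastColour T = some c₂) ↔
    (∃ P, (auxTrailGraph G).IsAltPath (Sum.inl (x, false)) (Sum.inl (y, false)) P ∧
      firstColour P = some c₁ ∧ lastColour P = some c₂) :=
  altTrail_iff_auxPath_general G x y hxy c₁ c₂
end
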